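/- arXiv:1301.5334 — 3 statements merged into one kernel-verified Lean document; each statement's English description precedes it below -/
import Mathlib

section
/- Let f : 2^S → ℝ≥0 be submodular, S_0, S_1,...,S_K ⊆ S, and let 0 ≤ r' ≤ J ≤ K be integers. Then ∑_{r=1}^{r'} f(S_r ∪ S_0) + ∑_{r=r'+1}^{J} f(S_r ∪ S^{(r'+1)}([r]) ∪ S_0) ≥ ∑_{r=1}^{r'} f(S^{(r)}([J]) ∪ S_0) + ∑_{r=r'+1}^{J} f(S^{(r'+1)}([r]) ∪ S_0). -/
/-!
Write `A r = S^{(r)}(U)`, a decreasing chain with `A 0 = univ`, and `A' r = S^{(r)}(U ∪ {a})`,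
so that `A' (r + 1) = A (r + 1) ∪ (A r ∩ S a)`. Submodularity applied to `A r` and `A (r - 1) ∩ B`
for `r = 1, …, n` telescopes along the chain; for `B = S a ∪ A' (n + 1)` it gives
`∑_{r ≤ n} g (A' r) + g (A' (n + 1)) ≤ ∑_{r ≤ n} g (A r) + g (S a ∪ A' (n + 1))`.
With `U = [J]`, `a = J + 1`, `n = r'` this is the step of an induction on `J ≥ r'`. The base case
`J = r'` follows from the same inequality with `n = |U|`, where `A' (n + 1) ⊆ S a`, by induction on
`r'`. Finally, `A ↦ f (A ∪ S₀)` is again submodular.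
-/

open Finset

/-- `cutOp S U r` is `S^{(r)}(U) = ⋃_{U' ⊆ U, |U'| = r} ⋂_{k ∈ U'} S_k`. -/
def cutOp {α : Type*} [Fintype α] [DecidableEq α] (S : ℕ → Finset α) (U : Finset ℕ)
    (r : ℕ) : Finset α :=
  (U.powersetCard r).sup fun V => V.inf S

def IsSubmodular {β : Type*} [Lattice β] (g : β → ℝ) : Prop :=
  ∀ a b, g (a ⊔ b) + g (a ⊓ b) ≤ g a + g b

namespace IsSubmodular

variable {β : Type*} {g : β → ℝ}

theorem comp_sup_right [DistribLattice β] (hg : IsSubmodular g) (c : β) :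
    IsSubmodular fun a => g (a ⊔ c) := fun a b => by
  have h := hg (a ⊔ c) (b ⊔ c)
  rwa [← sup_sup_distrib_right, ← sup_inf_right] at h

theorem sum_sup_inf_le_of_antitone [Lattice β] (hg : IsSubmodular g) {A : ℕ → β}
    (hA : Antitone A) (b : β) (n : ℕ) :
    ∑ r ∈ Icc 1 n, g (A r ⊔ A (r - 1) ⊓ b) + g (A n ⊓ b)
      ≤ ∑ r ∈ Icc 1 n, g (A r) + g (A 0 ⊓ b) := by
  induction n with
  | zero => simp
  | succ n ih =>
    have hsub := hg (A (n + 1)) (A n ⊓ b)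
    rw [← inf_assoc, inf_eq_left.2 (hA n.le_succ)] at hsub
    rw [sum_Icc_succ_top (by omega), sum_Icc_succ_top (by omega), Nat.add_sub_cancel]
    linarith

end IsSubmodular

section cutOp

variable {α : Type*} [Fintype α] [DecidableEq α] (S : ℕ → Finset α)

@[simp]
theorem cutOp_zero (U : Finset ℕ) : cutOp S U 0 = univ := by
  simp [cutOp]

theorem antitone_cutOp (U : Finset ℕ) : Antitone (cutOp S U) := by
  intro r t hrt
  refine Finset.sup_le fun V hV => ?_
  rw [mem_powersetCard] at hV
  obtain ⟨W, hWV, hWcard⟩ := exists_subset_card_eq (hV.2 ▸ hrt)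
  exact le_sup_of_le (mem_powersetCard.2 ⟨hWV.trans hV.1, hWcard⟩) (inf_mono hWV)

theorem cutOp_eq_empty {U : Finset ℕ} {r : ℕ} (h : U.card < r) : cutOp S U r = ∅ := by
  simp [cutOp, powersetCard_eq_empty.2 h]

theorem cutOp_insert_succ {U : Finset ℕ} {a : ℕ} (ha : a ∉ U) (s : ℕ) :
    cutOp S (insert a U) (s + 1) = cutOp S U (s + 1) ∪ cutOp S U s ∩ S a := by
  simp only [cutOp, powersetCard_succ_insert ha, sup_union, sup_image, ← inf_eq_inter,
    sup_inf_distrib_right]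
  congr 2 with x
  simp [inf_insert, _root_.inf_comm]


variable {g : Finset α → ℝ}

theorem IsSubmodular.sum_cutOp_insert_le (hg : IsSubmodular g) {U : Finset ℕ} {a : ℕ}
    (ha : a ∉ U) (n : ℕ) :
    ∑ r ∈ Icc 1 n, g (cutOp S (insert a U) r) + g (cutOp S (insert a U) (n + 1))
      ≤ ∑ r ∈ Icc 1 n, g (cutOp S U r) + g (S a ∪ cutOp S (insert a U) (n + 1)) := by
  set C := cutOp S (insert a U) (n + 1)
  have hC : C = cutOp S U (n + 1) ∪ cutOp S U n ∩ S a := cutOp_insert_succ S ha n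
  have hinter (s : ℕ) (hs : s ≤ n) : cutOp S U s ∩ (S a ∪ C) = cutOp S U s ∩ S a ∪ C := by
    have hCs : C ⊆ cutOp S U s := hC ▸ union_subset (antitone_cutOp S U (by omega))
      (inter_subset_left.trans (antitone_cutOp S U hs))
    rw [inter_union_distrib_left, inter_eq_right.2 hCs]
  have hmid : ∀ r ∈ Icc 1 n,
      cutOp S U r ∪ cutOp S U (r - 1) ∩ (S a ∪ C) = cutOp S (insert a U) r := by
    intro r hr
    obtain ⟨s, rfl⟩ : ∃ s, r = s + 1 := ⟨r - 1, by grind⟩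
    rw [Nat.add_sub_cancel, hinter s (by grind), ← union_assoc, ← cutOp_insert_succ S ha,
      union_eq_left.2 (antitone_cutOp S _ (by grind))]
  have hlast : cutOp S U n ∩ (S a ∪ C) = C := by
    rw [hinter n le_rfl, union_eq_right, hC]
    exact subset_union_right
  have hchain := hg.sum_sup_inf_le_of_antitone (antitone_cutOp S U) (S a ∪ C) n
  simp only [sup_eq_union, inf_eq_inter, cutOp_zero, univ_inter] at hchain
  rwa [sum_congr rfl fun r hr => congrArg g (hmid r hr), hlast] at hchain

theorem IsSubmodular.sum_cutOp_Icc_le (hg : IsSubmodular g) (m : ℕ) :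
    ∑ r ∈ Icc 1 m, g (cutOp S (Icc 1 m) r) ≤ ∑ r ∈ Icc 1 m, g (S r) := by
  induction m with
  | zero => simp
  | succ m ih =>
    have hstep := hg.sum_cutOp_insert_le S (U := Icc 1 m) (a := m + 1) (by simp) m
    have htop : S (m + 1) ∪ cutOp S (insert (m + 1) (Icc 1 m)) (m + 1) = S (m + 1) := by
      rw [union_eq_left, cutOp_insert_succ S (by simp), cutOp_eq_empty S (by simp), empty_union]
      exact inter_subset_right
    rw [htop, insert_Icc_right_eq_Icc_add_one (by omega)] at hstep
    rw [sum_Icc_succ_top (by omega), sum_Icc_succ_top (by omega)]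
    linarith

theorem IsSubmodular.sum_cutOp_le (hg : IsSubmodular g) {r' J : ℕ} (h : r' ≤ J) :
    ∑ r ∈ Icc 1 r', g (cutOp S (Icc 1 J) r)
        + ∑ r ∈ Icc (r' + 1) J, g (cutOp S (Icc 1 r) (r' + 1))
      ≤ ∑ r ∈ Icc 1 r', g (S r) + ∑ r ∈ Icc (r' + 1) J, g (S r ∪ cutOp S (Icc 1 r) (r' + 1)) := by
  induction J, h using Nat.le_induction with
  | base => simpa using hg.sum_cutOp_Icc_le S r'
  | succ J hJ ih =>
    have hstep := hg.sum_cutOp_insert_le S (U := Icc 1 J) (a := J + 1) (by simp) r'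
    rw [insert_Icc_right_eq_Icc_add_one (by omega)] at hstep
    rw [sum_Icc_succ_top (by omega), sum_Icc_succ_top (by omega)]
    linarith

end cutOp

theorem corollary1_submodular_general {α : Type*} [Fintype α] [DecidableEq α]
    (f : Finset α → ℝ)
    (hf : ∀ A B : Finset α, f A + f B ≥ f (A ∪ B) + f (A ∩ B))
    (S : ℕ → Finset α) (S0 : Finset α) (r' J : ℕ) (h1 : r' ≤ J) :
    ∑ r ∈ Finset.Icc 1 r', f (S r ∪ S0)
      + ∑ r ∈ Finset.Icc (r' + 1) J, f (S r ∪ cutOp S (Finset.Icc 1 r) (r' + 1) ∪ S0)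
    ≥ ∑ r ∈ Finset.Icc 1 r', f (cutOp S (Finset.Icc 1 J) r ∪ S0)
      + ∑ r ∈ Finset.Icc (r' + 1) J, f (cutOp S (Finset.Icc 1 r) (r' + 1) ∪ S0) :=
  (IsSubmodular.comp_sup_right hf S0).sum_cutOp_le S h1

theorem corollary1_submodular {α : Type*} [Fintype α] [DecidableEq α] (K : ℕ)
    (f : Finset α → ℝ) (hf0 : ∀ A, 0 ≤ f A)
    (hf : ∀ A B : Finset α, f A + f B ≥ f (A ∪ B) + f (A ∩ B))
    (S : ℕ → Finset α) (S0 : Finset α) (r' J : ℕ) (h1 : r' ≤ J) (h2 : J ≤ K) :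
    ∑ r ∈ Finset.Icc 1 r', f (S r ∪ S0)
      + ∑ r ∈ Finset.Icc (r' + 1) J, f (S r ∪ cutOp S (Finset.Icc 1 r) (r' + 1) ∪ S0)
    ≥ ∑ r ∈ Finset.Icc 1 r', f (cutOp S (Finset.Icc 1 J) r ∪ S0)
      + ∑ r ∈ Finset.Icc (r' + 1) J, f (cutOp S (Finset.Icc 1 r) (r' + 1) ∪ S0) :=
  corollary1_submodular_general f hf S S0 r' J h1
end

section
/- Let f : 2^S → ℝ≥0 be modular, and let S_1,...,S_K ⊆ S. Let U and T = {t_1 < ⋯ < t_{|T|}} be nonempty subsets of [K], and let q ∈ [|U|], r_q ∈ [|T|] satisfy S^{(q)}(U) ⊆ S^{(r_q)}(T). Then ∑_{r=1}^{|T|} f(S_{t_r}) + r_q · f(S^{(q)}(U)) = ∑_{r=1}^{r_q} ( f(S^{(r)}(T)) + f(S_{t_r} ∩ S^{(q)}(U)) ) + ∑_{r=r_q+1}^{|T|} f( S_{t_r} ∩ ( S^{(q)}(U) ∪ S^{(r_q+1)}({t_1,...,t_r}) ) ). -/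
open Finset

/-!
A modular `f` is affine in the indicator vector: `f A = f ∅ + ∑_{x ∈ A} (f {x} - f ∅)`. Both sides
of the identity are sums of `|T| + r_q` values of `f`, so it suffices that every point `x` lies in
equally many of the sets on the two sides. If `x` lies in exactly `d` of the sets `S_{t_r}`, then
`x ∈ S^{(r)}(T)` iff `r ≤ d`, and `x ∈ S^{(r_q+1)}({t_1, …, t_r})` iff at least `r_q + 1` of
`S_{t_1}, …, S_{t_r}` contain `x`. For `x ∈ S^{(q)}(U)` the hypothesis gives `d ≥ r_q` and both
sides count `d + r_q`; otherwise both sides count `d`.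
-/

section Modular

variable {α : Type*} [DecidableEq α] {f : Finset α → ℝ}

theorem modular_eq_add_sum (hf : ∀ A B : Finset α, f A + f B = f (A ∪ B) + f (A ∩ B))
    (A : Finset α) : f A = f ∅ + ∑ x ∈ A, (f {x} - f ∅) := by
  induction A using Finset.induction_on with
  | empty => simp
  | @insert a A ha ih =>
    have h := hf A {a}
    rw [union_comm, ← insert_eq, inter_comm, singleton_inter_of_notMem ha] at h
    rw [sum_insert ha]
    linarith

theorem sum_modular_eq [Fintype α] (hf : ∀ A B : Finset α, f A + f B = f (A ∪ B) + f (A ∩ B))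
    {ι : Type*} (s : Finset ι) (B : ι → Finset α) :
    ∑ i ∈ s, f (B i) = #s * f ∅ + ∑ x, #{i ∈ s | x ∈ B i} * (f {x} - f ∅) := by
  simp_rw [modular_eq_add_sum hf (B _), sum_add_distrib, sum_const, nsmul_eq_mul]
  rw [sum_comm' (t' := univ) (s' := fun x => {i ∈ s | x ∈ B i}) (by simp)]
  simp [mul_sub]

end Modular

section Counting

variable (p : ℕ → Prop) [DecidablePred p]

theorem card_filter_Icc_one_le_self (r : ℕ) : #{j ∈ Icc 1 r | p j} ≤ r :=
  (card_filter_le _ _).trans (by simp)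

theorem card_filter_Icc_one_le_eq_min (m d : ℕ) : #{r ∈ Icc 1 m | r ≤ d} = min m d := by
  rw [show {r ∈ Icc 1 m | r ≤ d} = Icc 1 (min m d) by ext; simp; omega]
  simp

theorem card_filter_Icc_add_card_filter_Icc {m n : ℕ} (hmn : m ≤ n) :
    #{r ∈ Icc 1 m | p r} + #{r ∈ Icc (m + 1) n | p r} = #{r ∈ Icc 1 n | p r} := by
  have hIcc : ∀ b, Icc 1 b = Ioc 0 b := Icc_add_one_left_eq_Ioc 0
  simp only [card_filter, hIcc, Icc_add_one_left_eq_Ioc]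
  exact sum_Ioc_consecutive _ (Nat.zero_le m) hmn

-- The `r` counted are the positions of the `(m+1)`-st, `(m+2)`-nd, … index satisfying `p`.
theorem card_filter_lt_card_filter_Icc {m n : ℕ} (hmn : m ≤ n) :
    #{r ∈ Icc (m + 1) n | p r ∧ m < #{j ∈ Icc 1 r | p j}} = #{j ∈ Icc 1 n | p j} - m := by
  induction n, hmn using Nat.le_induction with
  | base => simp [card_filter_Icc_one_le_self]
  | succ n hmn ih =>
    have hIcc : ∀ b, Icc 1 b = Ioc 0 b := Icc_add_one_left_eq_Ioc 0
    simp only [card_filter, hIcc, Icc_add_one_left_eq_Ioc] at ih ⊢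
    rw [sum_Ioc_succ_top hmn, sum_Ioc_succ_top (Nat.zero_le n), ih]
    split_ifs <;> grind

end Counting

section CutOp

variable {α : Type*} [Fintype α] [DecidableEq α] {S : ℕ → Finset α}

theorem mem_cutOp {x : α} {U : Finset ℕ} {r : ℕ} : x ∈ cutOp S U r ↔ r ≤ #{k ∈ U | x ∈ S k} := by
  simp only [cutOp, mem_sup, mem_powersetCard, mem_inf]
  constructor
  · rintro ⟨V, ⟨hVU, rfl⟩, hx⟩
    exact card_le_card fun k hk => mem_filter.2 ⟨hVU hk, hx k hk⟩
  · intro h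
    obtain ⟨V, hV, rfl⟩ := exists_subset_card_eq h
    exact ⟨V, ⟨hV.trans (filter_subset _ _), rfl⟩, fun k hk => (mem_filter.1 (hV hk)).2⟩

theorem mem_cutOp_image {x : α} {s : Finset ℕ} {t : ℕ → ℕ} (ht : Set.InjOn t s) {r : ℕ} :
    x ∈ cutOp S (s.image t) r ↔ r ≤ #{j ∈ s | x ∈ S (t j)} := by
  rw [mem_cutOp, filter_image, card_image_of_injOn (ht.mono (filter_subset _ _))]

theorem card_filter_cover_eq {t : ℕ → ℕ} {n rq : ℕ} {T : Finset ℕ} {A : Finset α}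
    (ht : Set.InjOn t (Icc 1 n)) (hT : (Icc 1 n).image t = T) (hA : A ⊆ cutOp S T rq)
    (hrq : rq ≤ n) (x : α) :
    #{r ∈ Icc 1 n | x ∈ S (t r)} + #{_r ∈ Icc 1 rq | x ∈ A}
      = #{r ∈ Icc 1 rq | x ∈ cutOp S T r} + #{r ∈ Icc 1 rq | x ∈ S (t r) ∩ A}
        + #{r ∈ Icc (rq + 1) n | x ∈ S (t r) ∩ (A ∪ cutOp S ((Icc 1 r).image t) (rq + 1))} := by
  have hmemT : ∀ r, x ∈ cutOp S T r ↔ r ≤ #{j ∈ Icc 1 n | x ∈ S (t j)} := fun _ => by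
    rw [← hT, mem_cutOp_image ht]
  have hsplit := card_filter_Icc_add_card_filter_Icc (fun j => x ∈ S (t j)) hrq
  by_cases hx : x ∈ A
  · have := (hmemT rq).1 (hA hx)
    simp only [hx, hmemT, mem_inter, mem_union, and_true, true_or, filter_true, Nat.card_Icc,
      card_filter_Icc_one_le_eq_min]
    omega
  · have hprefix : ∀ r ∈ Icc (rq + 1) n,
        x ∈ cutOp S ((Icc 1 r).image t) (rq + 1) ↔ rq < #{j ∈ Icc 1 r | x ∈ S (t j)} :=
      fun r hr => mem_cutOp_image (ht.mono (coe_subset.2 (Icc_subset_Icc_right (mem_Icc.1 hr).2)))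
    simp only [hx, hmemT, mem_inter, mem_union, and_false, false_or, filter_false, card_empty,
      card_filter_Icc_one_le_eq_min]
    rw [filter_congr fun r hr => and_congr_right' (hprefix r hr),
      card_filter_lt_card_filter_Icc _ hrq]
    omega

end CutOp

theorem lemma2_modular_general {α : Type*} [Fintype α] [DecidableEq α]
    (f : Finset α → ℝ)
    (hf : ∀ A B : Finset α, f A + f B = f (A ∪ B) + f (A ∩ B))
    (S : ℕ → Finset α) (U T : Finset ℕ)
    (t : ℕ → ℕ) (ht : StrictMonoOn t (Set.Icc 1 T.card))
    (himg : (Finset.Icc 1 T.card).image t = T)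
    (q rq : ℕ) (hrq2 : rq ≤ T.card)
    (hsub : cutOp S U q ⊆ cutOp S T rq) :
    ∑ r ∈ Finset.Icc 1 T.card, f (S (t r)) + (rq : ℝ) * f (cutOp S U q)
    = ∑ r ∈ Finset.Icc 1 rq, (f (cutOp S T r) + f (S (t r) ∩ cutOp S U q))
      + ∑ r ∈ Finset.Icc (rq + 1) T.card,
          f (S (t r) ∩ (cutOp S U q ∪ cutOp S ((Finset.Icc 1 r).image t) (rq + 1))) := by
  have hinj : Set.InjOn t (Icc 1 T.card) := by simpa using ht.injOn
  have hcount := card_filter_cover_eq hinj himg hsub hrq2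
  have hweights := sum_congr rfl fun x (_ : x ∈ univ) =>
    congrArg (fun c : ℕ => (c : ℝ) * (f {x} - f ∅)) (hcount x)
  push_cast [add_mul, sum_add_distrib] at hweights
  have hconst : (rq : ℝ) * f (cutOp S U q) = ∑ _r ∈ Icc 1 rq, f (cutOp S U q) := by simp
  rw [hconst, sum_add_distrib]
  simp only [sum_modular_eq hf, Nat.card_Icc, Nat.add_sub_cancel, Nat.add_sub_add_right]
  rw [Nat.cast_sub hrq2]
  linear_combination hweights

theorem lemma2_modular {α : Type*} [Fintype α] [DecidableEq α] (K : ℕ)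
    (f : Finset α → ℝ) (hf0 : ∀ A, 0 ≤ f A)
    (hf : ∀ A B : Finset α, f A + f B = f (A ∪ B) + f (A ∩ B))
    (S : ℕ → Finset α) (U T : Finset ℕ)
    (hU : U ⊆ Finset.Icc 1 K) (hT : T ⊆ Finset.Icc 1 K)
    (hUne : U.Nonempty) (hTne : T.Nonempty)
    (t : ℕ → ℕ) (ht : StrictMonoOn t (Set.Icc 1 T.card))
    (himg : (Finset.Icc 1 T.card).image t = T)
    (q rq : ℕ) (hq1 : 1 ≤ q) (hq2 : q ≤ U.card) (hrq1 : 1 ≤ rq) (hrq2 : rq ≤ T.card)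
    (hsub : cutOp S U q ⊆ cutOp S T rq) :
    ∑ r ∈ Finset.Icc 1 T.card, f (S (t r)) + (rq : ℝ) * f (cutOp S U q)
    = ∑ r ∈ Finset.Icc 1 rq, (f (cutOp S T r) + f (S (t r) ∩ cutOp S U q))
      + ∑ r ∈ Finset.Icc (rq + 1) T.card,
          f (S (t r) ∩ (cutOp S U q ∪ cutOp S ((Finset.Icc 1 r).image t) (rq + 1))) :=
  lemma2_modular_general f hf S U T t ht himg q rq hrq2 hsub
end

section
/- With G_r := S_r ∪ T_r as above (T_r = ∅ for r ≤ r', T_r = S^{(r'+1)}([r]) for r > r'), for any r ∈ {r'+1,...,J} one has G^{(r)}([J]) = ⋃_{m=1}^{min{r, r'+2}} ( S^{(m−1)}([J−r+m−1]) ∩ T_{J−r+m} ), where S^{(0)}(∅) is interpreted as the whole ground set S. -/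
open Finset

lemma mem_cutOp_s11 {α : Type*} [Fintype α] [DecidableEq α] (S : ℕ → Finset α) (U : Finset ℕ)
    (n : ℕ) (x : α) :
    x ∈ cutOp S U n ↔ ∃ W, W ⊆ U ∧ W.card = n ∧ ∀ k ∈ W, x ∈ S k := by
  simp [cutOp, Finset.mem_sup, Finset.mem_powersetCard, Finset.mem_inf, and_assoc]

lemma cutOp_mono_right {α : Type*} [Fintype α] [DecidableEq α] (S : ℕ → Finset α)
    {U U' : Finset ℕ} (h : U ⊆ U') (n : ℕ) : cutOp S U n ⊆ cutOp S U' n :=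
  Finset.le_iff_subset.mp (Finset.sup_mono (Finset.powersetCard_mono h))

theorem fact1 {α : Type*} [Fintype α] [DecidableEq α] (S : ℕ → Finset α)
    (r' J : ℕ) (h0 : 0 < r') (h1 : r' < J)
    (T : ℕ → Finset α)
    (hT : ∀ r, T r = if r ≤ r' then ∅ else cutOp S (Finset.Icc 1 r) (r' + 1))
    (G : ℕ → Finset α) (hG : ∀ r, G r = S r ∪ T r)
    (r : ℕ) (hr1 : r' + 1 ≤ r) (hr2 : r ≤ J) :
    cutOp G (Finset.Icc 1 J) r
      = (Finset.Icc 1 (min r (r' + 2))).sup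
          (fun m => cutOp S (Finset.Icc 1 (J - r + m - 1)) (m - 1) ∩ T (J - r + m)) := by
  classical
  have hTmono : ∀ a b, a ≤ b → T a ⊆ T b := by
    intro a b hab
    rw [hT a, hT b]
    by_cases ha : a ≤ r'
    · simp only [if_pos ha]
      exact empty_subset _
    · have hb : ¬ b ≤ r' := fun h => ha (hab.trans h)
      simp only [if_neg ha, if_neg hb]
      exact cutOp_mono_right S (Finset.Icc_subset_Icc_right hab) _
  ext x
  have hTmem : ∀ v, r' < v →
      (x ∈ T v ↔ ∃ W, W ⊆ Finset.Icc 1 v ∧ W.card = r' + 1 ∧ ∀ k ∈ W, x ∈ S k) := by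
    intro v hv
    rw [hT v, if_neg (not_le.mpr hv)]
    exact mem_cutOp_s11 S _ _ x
  simp only [mem_cutOp_s11, Finset.mem_sup, Finset.mem_Icc, Finset.mem_inter]
  constructor
  · rintro ⟨V, hVU, hVcard, hVmem⟩
    set A := V.filter (fun k => x ∉ T k) with hAdef
    set B := V.filter (fun k => x ∈ T k) with hBdef
    have hSA : ∀ k ∈ A, x ∈ S k := by
      intro k hk
      have hkV := (Finset.mem_filter.mp hk).1
      have := hVmem k hkV
      rw [hG k] at this
      rcases Finset.mem_union.mp this with h | h
      · exact h
      · exact absurd h (Finset.mem_filter.mp hk).2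
    have key : ∀ s : Finset ℕ, s ⊆ Finset.Icc 1 J → r' + 1 ≤ s.card →
        (∀ k ∈ s, x ∈ S k) → ∃ v ∈ s, x ∈ T v := by
      intro s hs hcard hSs
      have hne : s.Nonempty := Finset.card_pos.mp (by omega)
      refine ⟨s.max' hne, s.max'_mem hne, ?_⟩
      have hsub : s ⊆ Finset.Icc 1 (s.max' hne) := by
        intro k hk
        exact Finset.mem_Icc.mpr ⟨(Finset.mem_Icc.mp (hs hk)).1, s.le_max' k hk⟩
      have hcs := Finset.card_le_card hsub
      rw [Nat.card_Icc] at hcs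
      have hv : r' < s.max' hne := by omega
      rw [hTmem _ hv]
      obtain ⟨W, hWs, hWcard⟩ := s.exists_subset_card_eq hcard
      exact ⟨W, hWs.trans hsub, hWcard, fun k hk => hSs k (hWs hk)⟩
    have hABcard : B.card + A.card = r := by
      rw [hAdef, hBdef, Finset.card_filter_add_card_filter_not, hVcard]
    have hAsub : A ⊆ Finset.Icc 1 J := (Finset.filter_subset _ _).trans hVU
    have hAcard : A.card ≤ r' := by
      by_contra hc
      push_neg at hc
      obtain ⟨v, hvA, hvT⟩ := key A hAsub (by omega) hSA
      exact (Finset.mem_filter.mp hvA).2 hvT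
    have hBne : B.Nonempty := Finset.card_pos.mp (by omega)
    set l := B.min' hBne with hldef
    have hlB : l ∈ B := B.min'_mem hBne
    have hlT : x ∈ T l := (Finset.mem_filter.mp hlB).2
    have hAltB : ∀ k ∈ A, ∀ j ∈ B, k < j := by
      intro k hk j hj
      by_contra h
      push_neg at h
      exact (Finset.mem_filter.mp hk).2 (hTmono j k h (Finset.mem_filter.mp hj).2)
    have hAbound : ∀ k ∈ A, k ≤ J - r + A.card := by
      intro k hk
      have hBsub : B ⊆ Finset.Icc (k + 1) J := by
        intro j hj
        exact Finset.mem_Icc.mpr ⟨hAltB k hk j hj,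
          (Finset.mem_Icc.mp (hVU ((Finset.filter_subset _ _) hj))).2⟩
      have := Finset.card_le_card hBsub
      rw [Nat.card_Icc] at this
      have hk1 := (Finset.mem_Icc.mp (hAsub hk)).1
      omega
    have hlJ : l ≤ J := (Finset.mem_Icc.mp (hVU ((Finset.filter_subset _ _) hlB))).2
    have hlbound : l ≤ J - r + A.card + 1 := by
      have hBsub : B \ {l} ⊆ Finset.Icc (l + 1) J := by
        intro j hj
        rw [Finset.mem_sdiff, Finset.mem_singleton] at hj
        have h1 : l ≤ j := B.min'_le j hj.1
        have h2 := (Finset.mem_Icc.mp (hVU ((Finset.filter_subset _ _) hj.1))).2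
        exact Finset.mem_Icc.mpr ⟨by omega, h2⟩
      have h1 := Finset.card_le_card hBsub
      rw [Nat.card_Icc, Finset.card_sdiff_of_subset (Finset.singleton_subset_iff.mpr hlB)] at h1
      simp only [Finset.card_singleton] at h1
      have hB1 : 1 ≤ B.card := Finset.card_pos.mpr hBne
      omega
    refine ⟨A.card + 1, ⟨by omega, le_min (by omega) (by omega)⟩, ?_, ?_⟩
    · refine ⟨A, ?_, by omega, hSA⟩
      intro k hk
      refine Finset.mem_Icc.mpr ⟨(Finset.mem_Icc.mp (hAsub hk)).1, ?_⟩
      have := hAbound k hk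
      omega
    · have he : J - r + (A.card + 1) = J - r + A.card + 1 := by omega
      rw [he]
      exact hTmono l _ hlbound hlT
  · rintro ⟨m, ⟨hm1, hm2⟩, hx1, hx2⟩
    obtain ⟨W, hWsub, hWcard, hWS⟩ := hx1
    have hmr : m ≤ r := hm2.trans (min_le_left _ _)
    have hd : Disjoint W (Finset.Icc (J - r + m) J) := by
      rw [Finset.disjoint_left]
      intro k hkW hkI
      have h1 := (Finset.mem_Icc.mp (hWsub hkW)).2
      have h2 := (Finset.mem_Icc.mp hkI).1
      omega
    refine ⟨W ∪ Finset.Icc (J - r + m) J, ?_, ?_, ?_⟩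
    · apply Finset.union_subset
      · exact hWsub.trans (Finset.Icc_subset_Icc_right (by omega))
      · exact Finset.Icc_subset_Icc_left (by omega)
    · rw [Finset.card_union_of_disjoint hd, hWcard, Nat.card_Icc]
      omega
    · intro k hk
      rw [hG k]
      rcases Finset.mem_union.mp hk with h | h
      · exact Finset.mem_union_left _ (hWS k h)
      · exact Finset.mem_union_right _ (hTmono (J - r + m) k (Finset.mem_Icc.mp h).1 hx2)
end
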